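/- arXiv:2007.01980 — 6 statements merged into one kernel-verified Lean document; each statement's English description precedes it below -/
import Mathlib

section
/- Let A and B be symmetric positive definite d×d real matrices with A ⪰ B (i.e., A − B is positive semidefinite). Then for every nonzero vector x ∈ ℝ^d, (xᵀ A x)/(xᵀ B x) ≤ det(A)/det(B). -/
/-!
Write `B = S²` with `S = √B` and whiten: `C = S⁻¹ A S⁻¹` satisfies `C ⪰ 1`, so every eigenvalue
of `C` is at least `1` and hence at most the product of all of them, `det C = det A / det B`.
Thus `C ⪯ (det C) • 1`, and conjugating back by `S` gives `A ⪯ (det A / det B) • B`, which is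
the claim once evaluated at `x`.
-/

open Matrix

open scoped MatrixOrder

namespace Matrix

variable {n : Type*} [Fintype n] [DecidableEq n]

theorem le_det_smul_one_of_one_le {C : Matrix n n ℝ} (hC : 1 ≤ C) : C ≤ C.det • 1 := by
  have hCh : C.IsHermitian := IsSelfAdjoint.of_nonneg (zero_le_one.trans hC)
  have one_le_eigenvalues : ∀ i, 1 ≤ hCh.eigenvalues i := by
    rw [← map_one (algebraMap ℝ (Matrix n n ℝ)), algebraMap_le_iff_le_spectrum hCh,
      hCh.spectrum_real_eq_range_eigenvalues] at hC
    exact fun i ↦ hC _ ⟨i, rfl⟩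
  have det_eq : C.det = ∏ i, hCh.eigenvalues i := by simpa using hCh.det_eq_prod_eigenvalues
  rw [← Algebra.algebraMap_eq_smul_one, le_algebraMap_iff_spectrum_le hCh,
    hCh.spectrum_real_eq_range_eigenvalues, det_eq]
  rintro _ ⟨i, rfl⟩
  exact Multiset.mem_le_prod_of_one_le one_le_eigenvalues (Finset.mem_univ_val i)

theorem le_det_div_det_smul_of_le {A B : Matrix n n ℝ} (hB : B.PosDef) (hBA : B ≤ A) :
    A ≤ (A.det / B.det) • B := by
  set S := CFC.sqrt B
  have hS : IsSelfAdjoint S := .of_nonneg (CFC.sqrt_nonneg B)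
  have hSS : S * S = B := CFC.sqrt_mul_sqrt_self B hB.posSemidef.nonneg
  have hSu : IsUnit S.det := (isUnit_iff_isUnit_det S).mp <|
    (CFC.isUnit_sqrt_iff B hB.posSemidef.nonneg).mpr hB.isUnit
  set C := S⁻¹ * A * S⁻¹
  have one_le_C : 1 ≤ C := by
    have h := IsSelfAdjoint.conjugate_le_conjugate hBA (IsHermitian.inv hS)
    rwa [← hSS, ← mul_assoc, nonsing_inv_mul _ hSu, one_mul, mul_nonsing_inv _ hSu] at h
  have hSCS : S * C * S = A := by
    simp only [C, ← mul_assoc, mul_nonsing_inv _ hSu, one_mul]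
    rw [mul_assoc, nonsing_inv_mul _ hSu, mul_one]
  have det_C : C.det = A.det / B.det := by
    rw [← hSS, det_mul, det_mul, det_mul, det_nonsing_inv, Ring.inverse_eq_inv']
    field_simp
  calc A = S * C * S := hSCS.symm
    _ ≤ S * (C.det • 1) * S := hS.conjugate_le_conjugate (le_det_smul_one_of_one_le one_le_C)
    _ = (A.det / B.det) • B := by rw [det_C, mul_smul_comm, mul_one, smul_mul_assoc, hSS]

end Matrix

theorem stmt1_general {d : ℕ} (A B : Matrix (Fin d) (Fin d) ℝ) (hB : B.PosDef)
    (hAB : (A - B).PosSemidef) (x : Fin d → ℝ) (hx : x ≠ 0) :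
    (x ⬝ᵥ A.mulVec x) / (x ⬝ᵥ B.mulVec x) ≤ A.det / B.det := by
  have hxBx : 0 < x ⬝ᵥ B *ᵥ x := by simpa using hB.dotProduct_mulVec_pos hx
  have hle := (le_det_div_det_smul_of_le hB hAB).dotProduct_mulVec_nonneg x
  rw [sub_mulVec, smul_mulVec, dotProduct_sub, dotProduct_smul, star_trivial, smul_eq_mul,
    sub_nonneg] at hle
  rwa [div_le_iff₀ hxBx]

/-- If `A ⪰ B` are positive definite, then the ratio of quadratic forms is bounded by the
ratio of determinants. -/
theorem stmt1 {d : ℕ} (A B : Matrix (Fin d) (Fin d) ℝ) (hA : A.PosDef) (hB : B.PosDef)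
    (hAB : (A - B).PosSemidef) (x : Fin d → ℝ) (hx : x ≠ 0) :
    (x ⬝ᵥ A.mulVec x) / (x ⬝ᵥ B.mulVec x) ≤ A.det / B.det :=
  stmt1_general A B hB hAB x hx
end

section
/- Generalized elliptical potential lemma: let X₁, …, Xₙ be symmetric positive semidefinite d×d real matrices with Tr(Xᵢ) ≤ 1 for all i, let Λ₀ be a symmetric positive definite matrix, and define Λᵢ = Λᵢ₋₁ + Xᵢ. If Tr(Xᵢ Λ₀⁻¹) ≤ 1 for all i ∈ [n], then ∑_{i=1}^n Tr(Xᵢ Λ_{i-1}⁻¹) ≤ 2 ln(det(Λₙ)/det(Λ₀)). -/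
/-!
Put `Λᵢ₊₁ = Λᵢ + Xᵢ` and `uᵢ = Tr(Xᵢ Λᵢ⁻¹)`. With `S = Λᵢ^{1/2}` one has
`det Λᵢ₊₁ = det Λᵢ · det(1 + S⁻¹ Xᵢ S⁻¹)`, and `det(1 + M) = ∏ (1 + λ) ≥ 1 + Tr M` for `M ⪰ 0`,
so `det Λᵢ₊₁ ≥ det Λᵢ · (1 + uᵢ)`. Since `Λᵢ⁻¹ ⪯ Λ₀⁻¹`, `uᵢ ≤ Tr(Xᵢ Λ₀⁻¹) ≤ 1`, and on `[0, 1]`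
`u ≤ 2 ln(1 + u)`. Hence `uᵢ ≤ 2 ln(det Λᵢ₊₁ / det Λᵢ)`, and the sum telescopes.
-/

open Matrix Finset
open scoped MatrixOrder

theorem Finset.one_add_sum_le_prod_one_add {ι R : Type*} [CommSemiring R] [PartialOrder R]
    [IsOrderedRing R] (s : Finset ι) {f : ι → R} (hf : ∀ i ∈ s, 0 ≤ f i) :
    1 + ∑ i ∈ s, f i ≤ ∏ i ∈ s, (1 + f i) := by
  induction s using Finset.cons_induction with
  | empty => simp
  | cons a s _ ih =>
    have hfa : 0 ≤ f a := hf a (mem_cons_self a s)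
    have hs : 0 ≤ ∑ i ∈ s, f i := sum_nonneg fun i hi => hf i (mem_cons_of_mem hi)
    rw [sum_cons, prod_cons]
    calc 1 + (f a + ∑ i ∈ s, f i) ≤ 1 + (f a + ∑ i ∈ s, f i) + f a * ∑ i ∈ s, f i :=
          le_add_of_nonneg_right (mul_nonneg hfa hs)
      _ = (1 + f a) * (1 + ∑ i ∈ s, f i) := by ring
      _ ≤ (1 + f a) * ∏ i ∈ s, (1 + f i) :=
          mul_le_mul_of_nonneg_left (ih fun i hi => hf i (mem_cons_of_mem hi))
            (add_nonneg zero_le_one hfa)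

theorem Real.half_le_log_one_add {u : ℝ} (h0 : 0 ≤ u) (h1 : u ≤ 1) :
    u / 2 ≤ Real.log (1 + u) := by
  have hpos : 0 < 1 + u := by linarith
  calc u / 2 ≤ u / (1 + u) := div_le_div_of_nonneg_left h0 hpos (by linarith)
    _ = 1 - (1 + u)⁻¹ := by field_simp; ring
    _ ≤ Real.log (1 + u) := Real.one_sub_inv_le_log_of_pos hpos

namespace Matrix

variable {m : Type*} [Fintype m] [DecidableEq m]

theorem IsHermitian.det_one_add {M : Matrix m m ℝ} (hM : M.IsHermitian) :
    (1 + M).det = ∏ i, (1 + hM.eigenvalues i) := by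
  have : cfc (fun x : ℝ => 1 + x) M = 1 + M := by
    rw [cfc_add .., cfc_const_one .., cfc_id' ..]
  rw [← this, hM.cfc_eq]
  simp [IsHermitian.cfc, -Unitary.conjStarAlgAut_apply, det_diagonal]

theorem PosSemidef.one_add_trace_le_det_one_add {M : Matrix m m ℝ} (hM : M.PosSemidef) :
    1 + M.trace ≤ (1 + M).det := by
  rw [hM.isHermitian.det_one_add, hM.isHermitian.trace_eq_sum_eigenvalues]
  exact one_add_sum_le_prod_one_add _ fun i _ => hM.eigenvalues_nonneg i

theorem PosSemidef.trace_mul_nonneg {A B : Matrix m m ℝ} (hA : A.PosSemidef)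
    (hB : B.PosSemidef) : 0 ≤ (A * B).trace := by
  obtain ⟨C, rfl⟩ := CStarAlgebra.nonneg_iff_eq_star_mul_self.mp hA.nonneg
  rw [Matrix.mul_assoc, Matrix.trace_mul_comm]
  exact (hB.mul_mul_conjTranspose_same C).trace_nonneg

theorem inv_sub_inv_add_eq {A P : Matrix m m ℝ} (hA : IsUnit A) (hAP : IsUnit (A + P)) :
    A⁻¹ - (A + P)⁻¹ = (A + P)⁻¹ * (P + P * A⁻¹ * P) * (A + P)⁻¹ := by
  have hmid : P + P * A⁻¹ * P = (A + P) * (A⁻¹ * P) := by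
    rw [Matrix.add_mul, ← Matrix.mul_assoc, mul_nonsing_inv _ ((isUnit_iff_isUnit_det A).mp hA),
      Matrix.one_mul, Matrix.mul_assoc]
  rw [inv_sub_inv (iff_of_true hA hAP), add_sub_cancel_left, hmid,
    nonsing_inv_mul_cancel_left _ _ ((isUnit_iff_isUnit_det _).mp hAP)]

theorem PosDef.posSemidef_inv_sub_inv_add {A P : Matrix m m ℝ} (hA : A.PosDef)
    (hP : P.PosSemidef) : (A⁻¹ - (A + P)⁻¹).PosSemidef := by
  have hAP : (A + P).PosDef := hA.add_posSemidef hP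
  rw [inv_sub_inv_add_eq hA.isUnit hAP.isUnit]
  have hmid : (P + P * A⁻¹ * P).PosSemidef := by
    refine hP.add ?_
    simpa only [hP.isHermitian.eq] using hA.inv.posSemidef.conjTranspose_mul_mul_same P
  simpa only [hAP.inv.isHermitian.eq] using hmid.conjTranspose_mul_mul_same (A + P)⁻¹

theorem PosDef.trace_mul_inv_add_le {A P X : Matrix m m ℝ} (hA : A.PosDef) (hP : P.PosSemidef)
    (hX : X.PosSemidef) : (X * (A + P)⁻¹).trace ≤ (X * A⁻¹).trace := by
  have h := hX.trace_mul_nonneg (hA.posSemidef_inv_sub_inv_add hP)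
  rw [Matrix.mul_sub, trace_sub] at h
  linarith

theorem PosDef.det_mul_one_add_trace_le_det_add {A X : Matrix m m ℝ} (hA : A.PosDef)
    (hX : X.PosSemidef) : A.det * (1 + (X * A⁻¹).trace) ≤ (A + X).det := by
  set S := CFC.sqrt A
  have hSS : S * S = A := CFC.sqrt_mul_sqrt_self A hA.posSemidef.nonneg
  have hS : S.PosSemidef := (CFC.sqrt_nonneg A).posSemidef
  have hSu : IsUnit S.det := (isUnit_iff_isUnit_det S).mp
    (isUnit_of_mul_isUnit_left (hSS ▸ hA.isUnit : IsUnit (S * S)))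
  set M := S⁻¹ * X * S⁻¹
  have hM : M.PosSemidef := by
    simpa only [conjTranspose_nonsing_inv, hS.isHermitian.eq]
      using hX.conjTranspose_mul_mul_same S⁻¹
  have hfac : A + X = S * (1 + M) * S := by
    simp only [M, Matrix.mul_add, Matrix.add_mul, Matrix.mul_one, hSS, Matrix.mul_assoc,
      mul_nonsing_inv_cancel_left _ _ hSu, nonsing_inv_mul _ hSu]
  have htr : M.trace = (X * A⁻¹).trace := by
    rw [← hSS, Matrix.mul_inv_rev, trace_mul_comm, ← Matrix.mul_assoc, trace_mul_comm]
  calc A.det * (1 + (X * A⁻¹).trace) = S.det * (1 + M.trace) * S.det := by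
        rw [htr, ← hSS, det_mul]; ring
    _ ≤ S.det * (1 + M).det * S.det := by
        gcongr
        exacts [hS.det_nonneg, hS.det_nonneg, hM.one_add_trace_le_det_one_add]
    _ = (A + X).det := by rw [hfac, det_mul, det_mul]

theorem PosDef.trace_mul_inv_le_two_mul_log_det_add_sub {A X : Matrix m m ℝ} (hA : A.PosDef)
    (hX : X.PosSemidef) (h1 : (X * A⁻¹).trace ≤ 1) :
    (X * A⁻¹).trace ≤ 2 * (Real.log (A + X).det - Real.log A.det) := by
  set u := (X * A⁻¹).trace
  have hu : 0 ≤ u := hX.trace_mul_nonneg hA.inv.posSemidef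
  have hlog : Real.log A.det + Real.log (1 + u) ≤ Real.log (A + X).det := by
    rw [← Real.log_mul hA.det_pos.ne' (by linarith)]
    exact Real.log_le_log (by have := hA.det_pos; positivity)
      (hA.det_mul_one_add_trace_le_det_add hX)
  linarith [Real.half_le_log_one_add hu h1]

end Matrix

theorem stmt3_general {d : ℕ} (n : ℕ) (X : ℕ → Matrix (Fin d) (Fin d) ℝ)
    (Λ₀ : Matrix (Fin d) (Fin d) ℝ) (hΛ₀ : Λ₀.PosDef)
    (hXpsd : ∀ i < n, (X i).PosSemidef)
    (hXtr0 : ∀ i < n, (X i * Λ₀⁻¹).trace ≤ 1) :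
    ∑ i ∈ Finset.range n, (X i * (Λ₀ + ∑ j ∈ Finset.range i, X j)⁻¹).trace
      ≤ 2 * Real.log ((Λ₀ + ∑ j ∈ Finset.range n, X j).det / Λ₀.det) := by
  set L : ℕ → Matrix (Fin d) (Fin d) ℝ := fun i => Λ₀ + ∑ j ∈ range i, X j
  have hpsd : ∀ i ≤ n, (∑ j ∈ range i, X j).PosSemidef := fun i hi =>
    posSemidef_sum _ fun j hj => hXpsd j (by rw [mem_range] at hj; omega)
  have hL : ∀ i ≤ n, (L i).PosDef := fun i hi => hΛ₀.add_posSemidef (hpsd i hi)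
  have step : ∀ i ∈ range n,
      (X i * (L i)⁻¹).trace ≤ 2 * (Real.log (L (i + 1)).det - Real.log (L i).det) := by
    intro i hi
    rw [mem_range] at hi
    have hsucc : L (i + 1) = L i + X i := by simp only [L, sum_range_succ, add_assoc]
    rw [hsucc]
    exact (hL i hi.le).trace_mul_inv_le_two_mul_log_det_add_sub (hXpsd i hi)
      ((hΛ₀.trace_mul_inv_add_le (hpsd i hi.le) (hXpsd i hi)).trans (hXtr0 i hi))
  calc ∑ i ∈ range n, (X i * (L i)⁻¹).trace
      ≤ ∑ i ∈ range n, 2 * (Real.log (L (i + 1)).det - Real.log (L i).det) := sum_le_sum step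
    _ = 2 * Real.log ((L n).det / Λ₀.det) := by
        rw [← mul_sum, sum_range_sub (fun i => Real.log (L i).det),
          Real.log_div (hL n le_rfl).det_pos.ne' hΛ₀.det_pos.ne']
        simp [L]

/-- Generalized elliptical potential lemma. -/
theorem stmt3 {d : ℕ} (n : ℕ) (X : ℕ → Matrix (Fin d) (Fin d) ℝ)
    (Λ₀ : Matrix (Fin d) (Fin d) ℝ) (hΛ₀ : Λ₀.PosDef)
    (hXpsd : ∀ i < n, (X i).PosSemidef)
    (hXtr : ∀ i < n, (X i).trace ≤ 1)
    (hXtr0 : ∀ i < n, (X i * Λ₀⁻¹).trace ≤ 1) :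
    ∑ i ∈ Finset.range n, (X i * (Λ₀ + ∑ j ∈ Finset.range i, X j)⁻¹).trace
      ≤ 2 * Real.log ((Λ₀ + ∑ j ∈ Finset.range n, X j).det / Λ₀.det) :=
  stmt3_general n X Λ₀ hΛ₀ hXpsd hXtr0
end

section
/- Lipschitzness of matrix square root: for any two symmetric positive definite d×d real matrices A, B with A ⪰ λI and B ⪰ λI for some λ > 0, the quadratic forms satisfy |xᵀ(A^{1/2} − B^{1/2})x| ≤ ‖A − B‖/(2√λ) for every unit vector x, and hence ‖A^{1/2} − B^{1/2}‖ ≤ ‖A − B‖/(2√λ). -/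
open Matrix

open scoped ComplexOrder in
/-- The positive semidefinite square root of a positive semidefinite matrix
(the definition `Matrix.PosSemidef.sqrt` of the older Mathlib, removed since). -/
noncomputable def Matrix.PosSemidef.sqrt {n 𝕜 : Type*} [Fintype n] [DecidableEq n] [RCLike 𝕜]
    {A : Matrix n n 𝕜} (hA : A.PosSemidef) : Matrix n n 𝕜 :=
  hA.1.eigenvectorUnitary.1 * diagonal ((↑) ∘ (Real.sqrt ·) ∘ hA.1.eigenvalues) *
    (star hA.1.eigenvectorUnitary : Matrix n n 𝕜)

/-- The operator (spectral) norm of a real matrix, viewed as a linear map on Euclidean space. -/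
noncomputable def opNorm {d : ℕ} (A : Matrix (Fin d) (Fin d) ℝ) : ℝ :=
  ‖Matrix.toEuclideanCLM (𝕜 := ℝ) A‖
/-!
If `(√A - √B) v = μ v`, the symmetry of `√A - √B` turns `A - B = √A (√A - √B) + (√A - √B) √B`
into `⟪(A - B) v, v⟫ = μ (⟪√A v, v⟫ + ⟪√B v, v⟫)`, and `√A, √B ⪰ √λ` bound the bracket below by
`2√λ ‖v‖²`. So every eigenvalue of the symmetric matrix `√A - √B` has absolute value at most
`‖A - B‖ / (2√λ)`, and the norm of a self-adjoint operator is its spectral radius.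
-/

open scoped NNReal ComplexOrder RealInnerProductSpace MatrixOrder
open Module.End

namespace ContinuousLinearMap

section RCLike

variable {𝕜 E : Type*} [RCLike 𝕜] [NormedAddCommGroup E] [InnerProductSpace 𝕜 E]
  [FiniteDimensional 𝕜 E] [CompleteSpace E]

theorem norm_le_of_forall_hasEigenvalue {T : E →L[𝕜] E} (hT : IsSelfAdjoint T) {c : ℝ}
    (hc : 0 ≤ c) (h : ∀ μ, HasEigenvalue (T : Module.End 𝕜 E) μ → ‖μ‖ ≤ c) : ‖T‖ ≤ c := by
  lift c to ℝ≥0 using hc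
  rw [← coe_nnnorm, NNReal.coe_le_coe, ← ENNReal.coe_le_coe, ← T.spectralRadius_eq_nnnorm hT]
  refine iSup₂_le fun μ hμ => ?_
  rw [spectrum_eq, ← hasEigenvalue_iff_mem_spectrum] at hμ
  exact ENNReal.coe_le_coe.2 (h μ hμ)

end RCLike

section Real

variable {E : Type*} [NormedAddCommGroup E] [InnerProductSpace ℝ E]

theorem abs_inner_apply_self_le (T : E →L[ℝ] E) (x : E) : |⟪T x, x⟫| ≤ ‖T‖ * ‖x‖ ^ 2 :=
  calc |⟪T x, x⟫| ≤ ‖T x‖ * ‖x‖ := abs_real_inner_le_norm _ _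
    _ ≤ ‖T‖ * ‖x‖ * ‖x‖ := by gcongr; exact T.le_opNorm x
    _ = ‖T‖ * ‖x‖ ^ 2 := by ring

theorem mul_norm_sq_le_inner_of_algebraMap_le {a : ℝ} {T : E →L[ℝ] E}
    (h : algebraMap ℝ _ a ≤ T) (x : E) : a * ‖x‖ ^ 2 ≤ ⟪T x, x⟫ := by
  have hx := ((le_def _ _).1 h).inner_nonneg_left x
  simp only [_root_.sub_apply, algebraMap_apply, inner_sub_left, real_inner_smul_left,
    inner_self_eq_norm_sq_to_K, Real.ringHom_apply, sub_nonneg] at hx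
  exact hx

variable [CompleteSpace E]

theorem isSelfAdjoint_of_algebraMap_le {a : ℝ} {T : E →L[ℝ] E} (h : algebraMap ℝ _ a ≤ T) :
    IsSelfAdjoint T := by
  simpa using ((le_def _ _).1 h).isSelfAdjoint.add (.algebraMap (E →L[ℝ] E) (.all a))

theorem inner_mul_self_sub_mul_self_apply {T U : E →L[ℝ] E} (hT : IsSelfAdjoint T)
    (hU : IsSelfAdjoint U) {μ : ℝ} {v : E} (hv : (T - U) v = μ • v) :
    ⟪(T * T - U * U) v, v⟫ = μ * (⟪T v, v⟫ + ⟪U v, v⟫) := by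
  have hsplit : T * T - U * U = T * (T - U) + (T - U) * U := by noncomm_ring
  have hT_symm : ⟪T ((T - U) v), v⟫ = ⟪(T - U) v, T v⟫ := hT.isSymmetric _ _
  have hD_symm : ⟪(T - U) (U v), v⟫ = ⟪U v, (T - U) v⟫ := (hT.sub hU).isSymmetric _ _
  rw [hsplit, _root_.add_apply, inner_add_left, mul_apply_eq_comp, mul_apply_eq_comp, hT_symm,
    hD_symm, hv, real_inner_smul_left, real_inner_smul_right, real_inner_comm v (T v)]
  ring

theorem abs_le_of_hasEigenvector_sub {a : ℝ} (ha : 0 < a) {T U : E →L[ℝ] E}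
    (hT : algebraMap ℝ _ a ≤ T) (hU : algebraMap ℝ _ a ≤ U) {μ : ℝ} {v : E}
    (hv : HasEigenvector ((T - U : E →L[ℝ] E) : Module.End ℝ E) μ v) :
    |μ| ≤ ‖T * T - U * U‖ / (2 * a) := by
  have hv_pos : 0 < ‖v‖ ^ 2 := pow_pos (norm_pos_iff.2 hv.2) 2
  have hsum : 2 * a * ‖v‖ ^ 2 ≤ ⟪T v, v⟫ + ⟪U v, v⟫ := by
    linarith [mul_norm_sq_le_inner_of_algebraMap_le hT v,
      mul_norm_sq_le_inner_of_algebraMap_le hU v]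
  have key : |μ| * (2 * a * ‖v‖ ^ 2) ≤ ‖T * T - U * U‖ * ‖v‖ ^ 2 :=
    calc |μ| * (2 * a * ‖v‖ ^ 2) ≤ |μ| * (⟪T v, v⟫ + ⟪U v, v⟫) := by gcongr
      _ = |⟪(T * T - U * U) v, v⟫| := by
        rw [inner_mul_self_sub_mul_self_apply (isSelfAdjoint_of_algebraMap_le hT)
          (isSelfAdjoint_of_algebraMap_le hU) hv.apply_eq_smul, abs_mul,
          abs_of_nonneg (by nlinarith : 0 ≤ ⟪T v, v⟫ + ⟪U v, v⟫)]
      _ ≤ ‖T * T - U * U‖ * ‖v‖ ^ 2 := abs_inner_apply_self_le _ v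
  rw [le_div_iff₀ (by positivity)]
  nlinarith

theorem norm_sub_le_norm_mul_self_sub_div [FiniteDimensional ℝ E] {a : ℝ} (ha : 0 < a)
    {T U : E →L[ℝ] E} (hT : algebraMap ℝ _ a ≤ T) (hU : algebraMap ℝ _ a ≤ U) :
    ‖T - U‖ ≤ ‖T * T - U * U‖ / (2 * a) := by
  refine norm_le_of_forall_hasEigenvalue
    ((isSelfAdjoint_of_algebraMap_le hT).sub (isSelfAdjoint_of_algebraMap_le hU))
    (by positivity) fun μ hμ => ?_
  obtain ⟨v, hv⟩ := hμ.exists_hasEigenvector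
  rw [Real.norm_eq_abs]
  exact abs_le_of_hasEigenvector_sub ha hT hU hv

end Real

end ContinuousLinearMap

theorem algebraMap_sqrt_le_cfc_sqrt {A : Type*} [TopologicalSpace A] [Ring A] [StarRing A]
    [PartialOrder A] [StarOrderedRing A] [Algebra ℝ A]
    [ContinuousFunctionalCalculus ℝ A IsSelfAdjoint] [NonnegSpectrumClass ℝ A]
    {a : A} (ha : IsSelfAdjoint a) {r : ℝ} (h : algebraMap ℝ A r ≤ a) :
    algebraMap ℝ A √r ≤ cfc Real.sqrt a := by
  rw [algebraMap_le_iff_le_spectrum ha] at h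
  rw [algebraMap_le_cfc_iff _ _ _ Real.continuous_sqrt.continuousOn ha]
  exact fun x hx => Real.sqrt_le_sqrt (h x hx)

namespace Matrix

variable {n 𝕜 : Type*} [Fintype n] [DecidableEq n] [RCLike 𝕜]

theorem toEuclideanCLM_le_toEuclideanCLM_iff {A B : Matrix n n 𝕜} :
    toEuclideanCLM (n := n) (𝕜 := 𝕜) A ≤ toEuclideanCLM (n := n) (𝕜 := 𝕜) B ↔ A ≤ B := by
  rw [ContinuousLinearMap.le_def, ← map_sub, ← ContinuousLinearMap.isPositive_toLinearMap_iff,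
    coe_toEuclideanCLM_eq_toEuclideanLin, isPositive_toEuclideanLin_iff, le_iff]

theorem abs_dotProduct_mulVec_self_le (M : Matrix n n ℝ) (x : n → ℝ) :
    |x ⬝ᵥ M *ᵥ x| ≤ ‖toEuclideanCLM (𝕜 := ℝ) M‖ * (x ⬝ᵥ x) := by
  have h := (toEuclideanCLM (𝕜 := ℝ) M).abs_inner_apply_self_le (WithLp.toLp 2 x)
  rwa [real_inner_comm, inner_toEuclideanCLM, ← real_inner_self_eq_norm_sq,
    EuclideanSpace.inner_eq_star_dotProduct] at h

namespace PosSemidef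

theorem sqrt_eq_cfc {A : Matrix n n 𝕜} (hA : A.PosSemidef) : hA.sqrt = cfc Real.sqrt A := by
  rw [hA.1.cfc_eq]
  rfl

theorem sqrt_mul_self {A : Matrix n n 𝕜} (hA : A.PosSemidef) : hA.sqrt * hA.sqrt = A := by
  rw [hA.sqrt_eq_cfc, ← cfc_mul _ _ A]
  conv_rhs => rw [← cfc_id' ℝ A]
  exact cfc_congr fun x hx =>
    Real.mul_self_sqrt (spectrum_nonneg_of_nonneg (nonneg_iff_posSemidef.2 hA) hx)

theorem algebraMap_sqrt_le_sqrt {A : Matrix n n 𝕜} (hA : A.PosSemidef) {r : ℝ}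
    (h : algebraMap ℝ _ r ≤ A) : algebraMap ℝ _ √r ≤ hA.sqrt :=
  hA.sqrt_eq_cfc ▸ algebraMap_sqrt_le_cfc_sqrt hA.1 h

theorem norm_toEuclideanCLM_sqrt_sub_sqrt_le {A B : Matrix n n ℝ} (hA : A.PosSemidef)
    (hB : B.PosSemidef) {r : ℝ} (hr : 0 < r) (hAr : algebraMap ℝ _ r ≤ A)
    (hBr : algebraMap ℝ _ r ≤ B) :
    ‖toEuclideanCLM (𝕜 := ℝ) (hA.sqrt - hB.sqrt)‖ ≤
      ‖toEuclideanCLM (𝕜 := ℝ) (A - B)‖ / (2 * √r) := by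
  have hsqrt_ge {M : Matrix n n ℝ} (hM : M.PosSemidef) (hMr : algebraMap ℝ _ r ≤ M) :
      algebraMap ℝ _ √r ≤ toEuclideanCLM (𝕜 := ℝ) hM.sqrt := by
    rw [← AlgHomClass.commutes (toEuclideanCLM (n := n) (𝕜 := ℝ)),
      toEuclideanCLM_le_toEuclideanCLM_iff]
    exact hM.algebraMap_sqrt_le_sqrt hMr
  have h := ContinuousLinearMap.norm_sub_le_norm_mul_self_sub_div (Real.sqrt_pos.2 hr)
    (hsqrt_ge hA hAr) (hsqrt_ge hB hBr)
  rwa [← map_mul, ← map_mul, ← map_sub, ← map_sub, hA.sqrt_mul_self, hB.sqrt_mul_self] at h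

end PosSemidef

end Matrix

/-- Lipschitzness of the matrix square root: if `A, B ⪰ λ I` then for every unit vector `x`,
`|xᵀ(√A - √B)x| ≤ ‖A - B‖ / (2√λ)`, and hence `‖√A - √B‖ ≤ ‖A - B‖ / (2√λ)`. -/
theorem stmt7 {d : ℕ} (lam : ℝ) (hlam : 0 < lam)
    (A B : Matrix (Fin d) (Fin d) ℝ) (hA : A.PosDef) (hB : B.PosDef)
    (hAl : (A - lam • 1).PosSemidef) (hBl : (B - lam • 1).PosSemidef) :
    (∀ x : Fin d → ℝ, x ⬝ᵥ x = 1 →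
      |x ⬝ᵥ (hA.posSemidef.sqrt - hB.posSemidef.sqrt).mulVec x|
        ≤ opNorm (A - B) / (2 * Real.sqrt lam)) ∧
    opNorm (hA.posSemidef.sqrt - hB.posSemidef.sqrt) ≤ opNorm (A - B) / (2 * Real.sqrt lam) := by
  have hle {M : Matrix (Fin d) (Fin d) ℝ} (hM : (M - lam • 1).PosSemidef) :
      algebraMap ℝ _ lam ≤ M := by
    rwa [le_iff, Algebra.algebraMap_eq_smul_one]
  have hnorm : opNorm (hA.posSemidef.sqrt - hB.posSemidef.sqrt) ≤ opNorm (A - B) / (2 * √lam) :=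
    hA.posSemidef.norm_toEuclideanCLM_sqrt_sub_sqrt_le hB.posSemidef hlam (hle hAl) (hle hBl)
  refine ⟨fun x hx => (abs_dotProduct_mulVec_self_le _ x).trans ?_, hnorm⟩
  rwa [hx, mul_one]
end

section
/- Softmax approximates max: let s₁, …, s_k ≥ 0 be nonnegative reals, not all zero, and let α ≥ log₂ k. If an index i is drawn with probability proportional to sᵢ^α, then the expected value E[sᵢ] ≥ (1/4) · max{s₁, …, s_k}. -/
/-!
Put `M = max sᵢ` and split the indices at `M / 2`. Every small index has `sᵢ^α ≤ (M/2)^α`,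
and since there are at most `k ≤ 2^α` of them their total weight is at most `M^α`, which is
itself at most the weight of the large indices (the maximiser is one of them). So the large
indices carry at least half of the softmax mass, and each contributes `sᵢ ≥ M / 2` to the
expectation.
-/

open Finset

theorem Finset.mul_sum_filter_le_sum_mul {ι : Type*} (t : Finset ι) (w s : ι → ℝ)
    (hw : ∀ i ∈ t, 0 ≤ w i) (hs : ∀ i ∈ t, 0 ≤ w i * s i) (c : ℝ) :
    c * ∑ i ∈ t with c ≤ s i, w i ≤ ∑ i ∈ t, w i * s i :=
  calc c * ∑ i ∈ t with c ≤ s i, w i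
      ≤ ∑ i ∈ t with c ≤ s i, w i * s i := by
        rw [mul_sum]
        refine sum_le_sum fun i hi => ?_
        rw [mem_filter] at hi
        nlinarith [hw i hi.1]
    _ ≤ ∑ i ∈ t, w i * s i :=
        sum_le_sum_of_subset_of_nonneg (filter_subset _ _) fun i hi _ => hs i hi

section Softmax

variable {ι : Type*} [Fintype ι] (s : ι → ℝ) {α : ℝ}

theorem sum_rpow_filter_lt_half_le (hs : ∀ i, 0 ≤ s i) (hα : 0 ≤ α)
    (hcard : (Fintype.card ι : ℝ) ≤ 2 ^ α) {M : ℝ} (hM : 0 ≤ M) :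
    ∑ i with s i < M / 2, s i ^ α ≤ M ^ α :=
  calc ∑ i with s i < M / 2, s i ^ α
      ≤ ∑ i with s i < M / 2, (M / 2) ^ α :=
        sum_le_sum fun i hi => Real.rpow_le_rpow (hs i) (mem_filter.mp hi).2.le hα
    _ = #{i | s i < M / 2} * (M / 2) ^ α := by rw [sum_const, nsmul_eq_mul]
    _ ≤ 2 ^ α * (M / 2) ^ α := by
        gcongr
        exact le_trans (by exact_mod_cast card_le_univ _) hcard
    _ = M ^ α := by rw [← Real.mul_rpow zero_le_two (by positivity)]; ring_nf

theorem div_four_mul_sum_rpow_le_sum_rpow_mul (hs : ∀ i, 0 ≤ s i) (hα : 0 ≤ α)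
    (hcard : (Fintype.card ι : ℝ) ≤ 2 ^ α) (i₀ : ι) :
    s i₀ / 4 * ∑ i, s i ^ α ≤ ∑ i, s i ^ α * s i := by
  set head := ∑ i with s i₀ / 2 ≤ s i, s i ^ α
  have hsplit : ∑ i, s i ^ α = head + ∑ i with s i < s i₀ / 2, s i ^ α := by
    simp_rw [head, ← not_le, sum_filter_add_sum_filter_not]
  have htail := sum_rpow_filter_lt_half_le s hs hα hcard (hs i₀)
  have hmax_le_head : s i₀ ^ α ≤ head :=
    single_le_sum (f := fun i => s i ^ α) (fun i _ => Real.rpow_nonneg (hs i) α)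
      (mem_filter.mpr ⟨mem_univ _, by linarith [hs i₀]⟩)
  have hmarkov : s i₀ / 2 * head ≤ ∑ i, s i ^ α * s i :=
    mul_sum_filter_le_sum_mul _ _ _ (fun i _ => Real.rpow_nonneg (hs i) α)
      (fun i _ => mul_nonneg (Real.rpow_nonneg (hs i) α) (hs i)) _
  have hs₀ := hs i₀
  calc s i₀ / 4 * ∑ i, s i ^ α
      = s i₀ / 4 * (head + ∑ i with s i < s i₀ / 2, s i ^ α) := by rw [hsplit]
    _ ≤ s i₀ / 4 * (head + head) := by gcongr; exact htail.trans hmax_le_head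
    _ = s i₀ / 2 * head := by ring
    _ ≤ ∑ i, s i ^ α * s i := hmarkov

end Softmax

/-- Softmax approximates the max: if `α ≥ log₂ k`, sampling `i` with probability proportional
to `sᵢ^α` yields expected value at least a quarter of the maximum. -/
theorem stmt9 (k : ℕ) (hk : 0 < k) (s : Fin k → ℝ) (hs : ∀ i, 0 ≤ s i)
    (hne : ∃ i, s i ≠ 0) (α : ℝ) (hα : Real.logb 2 k ≤ α) :
    (1 / 4) * Finset.univ.sup' (Finset.univ_nonempty_iff.mpr (Fin.pos_iff_nonempty.mp hk)) s
      ≤ ∑ i, (s i ^ α / ∑ j, s j ^ α) * s i := by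
  obtain ⟨i₀, -, hi₀⟩ :=
    exists_mem_eq_sup' (univ_nonempty_iff.mpr (Fin.pos_iff_nonempty.mp hk)) s
  obtain ⟨j, hj⟩ := hne
  have hα0 : 0 ≤ α := (Real.logb_nonneg one_lt_two (by exact_mod_cast hk)).trans hα
  have hcard : (Fintype.card (Fin k) : ℝ) ≤ 2 ^ α := by
    rw [Fintype.card_fin, ← Real.rpow_logb two_pos (by norm_num) (Nat.cast_pos.mpr hk)]
    exact Real.rpow_le_rpow_of_exponent_le one_le_two hα
  have hS : 0 < ∑ j, s j ^ α :=
    sum_pos' (fun i _ => Real.rpow_nonneg (hs i) α)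
      ⟨j, mem_univ _, Real.rpow_pos_of_pos ((hs j).lt_of_ne' hj) α⟩
  simp_rw [div_mul_eq_mul_div, ← sum_div, le_div_iff₀ hS, hi₀]
  linarith [div_four_mul_sum_rpow_le_sum_rpow_mul s hs hα0 hcard i₀]
end

section
/- Softmax probability stability: let α = ln K, let M, M′ be symmetric matrices with M ⪰ d⁻¹ I and ‖M − M′‖ ≤ 1/R where R ≥ 100 λ⁻¹ d ln K for some λ ∈ (0,1). Then for every vector x with ‖x‖ ≤ 1 and every finite set X of such vectors containing x, the softmax probabilities satisfy P[π_{M′}(X) = x] ≥ (1 − λ/30) · P[π_M(X) = x], where π_M(X) selects x ∈ X with probability (xᵀ M x)^α / ∑_{y∈X} (yᵀ M y)^α. -/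
/-!
Since `M ⪰ d⁻¹ I`, `‖y‖² ≤ d · yᵀMy`, so `‖M - M'‖ ≤ 1/R` gives
`(1 - t) yᵀMy ≤ yᵀM'y ≤ (1 + t) yᵀMy` with `t = d/R`. Raising to the power `α = ln K`, and using
`α t ≤ λ/100` together with `α ≥ ln 2 > 0.69` (so `t ≤ 1/69`), every weight changes by a factor in
`[1 - λ/90, 1 + λ/50]`. The numerator of the selection probability loses at most the first factor,
the normalising sum gains at most the second, and `(1 - λ/90) / (1 + λ/50) ≥ 1 - λ/30`.
-/

open Matrix

lemma abs_dotProduct_mulVec_le_opNorm_mul {d : ℕ} (A : Matrix (Fin d) (Fin d) ℝ)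
    (y : Fin d → ℝ) : |y ⬝ᵥ A *ᵥ y| ≤ opNorm A * (y ⬝ᵥ y) := by
  set v : EuclideanSpace ℝ (Fin d) := WithLp.toLp 2 y
  have hquad : y ⬝ᵥ A *ᵥ y = inner ℝ v (Matrix.toEuclideanCLM (𝕜 := ℝ) A v) := by
    rw [Matrix.toEuclideanCLM_toLp, EuclideanSpace.inner_toLp_toLp, dotProduct_comm]
    rfl
  have hnorm : y ⬝ᵥ y = ‖v‖ ^ 2 := by
    rw [← real_inner_self_eq_norm_sq, EuclideanSpace.inner_toLp_toLp]
    rfl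
  rw [hquad, hnorm]
  calc |inner ℝ v (Matrix.toEuclideanCLM (𝕜 := ℝ) A v)|
      ≤ ‖v‖ * ‖Matrix.toEuclideanCLM (𝕜 := ℝ) A v‖ := abs_real_inner_le_norm _ _
    _ ≤ ‖v‖ * (opNorm A * ‖v‖) := by
        gcongr; exact (Matrix.toEuclideanCLM (𝕜 := ℝ) A).le_opNorm v
    _ = opNorm A * ‖v‖ ^ 2 := by ring

lemma dotProduct_self_le_mul_dotProduct_mulVec {n : Type*} [Fintype n] [DecidableEq n]
    {M : Matrix n n ℝ} {c : ℝ} (hc : 0 < c) (hM : (M - c⁻¹ • 1).PosSemidef) (y : n → ℝ) :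
    y ⬝ᵥ y ≤ c * (y ⬝ᵥ M *ᵥ y) := by
  have h := hM.dotProduct_mulVec_nonneg y
  simp only [star_trivial, sub_mulVec, dotProduct_sub, smul_mulVec, one_mulVec,
    dotProduct_smul, smul_eq_mul, sub_nonneg] at h
  rwa [inv_mul_le_iff₀ hc] at h

lemma dotProduct_mulVec_nonneg_of_posSemidef_sub {n : Type*} [Fintype n] [DecidableEq n]
    {M : Matrix n n ℝ} {c : ℝ} (hc : 0 < c) (hM : (M - c⁻¹ • 1).PosSemidef) (y : n → ℝ) :
    0 ≤ y ⬝ᵥ M *ᵥ y :=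
  nonneg_of_mul_nonneg_right
    ((dotProduct_star_self_nonneg y).trans (dotProduct_self_le_mul_dotProduct_mulVec hc hM y)) hc

lemma abs_dotProduct_mulVec_sub_le {d : ℕ} {M M' : Matrix (Fin d) (Fin d) ℝ} {c R : ℝ}
    (hc : 0 < c) (hM : (M - c⁻¹ • 1).PosSemidef) (hdiff : opNorm (M - M') ≤ 1 / R)
    (y : Fin d → ℝ) : |y ⬝ᵥ M' *ᵥ y - y ⬝ᵥ M *ᵥ y| ≤ c / R * (y ⬝ᵥ M *ᵥ y) := by
  have hR : 0 ≤ 1 / R := (norm_nonneg _).trans hdiff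
  calc |y ⬝ᵥ M' *ᵥ y - y ⬝ᵥ M *ᵥ y| = |y ⬝ᵥ (M - M') *ᵥ y| := by
        rw [abs_sub_comm, sub_mulVec, dotProduct_sub]
    _ ≤ opNorm (M - M') * (y ⬝ᵥ y) := abs_dotProduct_mulVec_le_opNorm_mul _ y
    _ ≤ 1 / R * (c * (y ⬝ᵥ M *ᵥ y)) := by
        gcongr
        · simpa using dotProduct_star_self_nonneg y
        · exact dotProduct_self_le_mul_dotProduct_mulVec hc hM y
    _ = c / R * (y ⬝ᵥ M *ᵥ y) := by ring

namespace Real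

lemma one_add_rpow_le_exp_mul {t α : ℝ} (ht : 0 ≤ t) (hα : 0 ≤ α) :
    (1 + t) ^ α ≤ exp (α * t) := by
  rw [rpow_def_of_pos (by linarith), mul_comm]
  gcongr
  linarith [log_le_sub_one_of_pos (show 0 < 1 + t by linarith)]

lemma one_sub_mul_div_le_one_sub_rpow {t α : ℝ} (ht : t < 1) (hα : 0 ≤ α) :
    1 - α * (t / (1 - t)) ≤ (1 - t) ^ α := by
  have h1t : 0 < 1 - t := by linarith
  have hlog : -(t / (1 - t)) ≤ log (1 - t) := by
    have h := one_sub_inv_le_log_of_pos h1t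
    rwa [show 1 - (1 - t)⁻¹ = -(t / (1 - t)) by field_simp; ring] at h
  rw [rpow_def_of_pos h1t]
  calc 1 - α * (t / (1 - t)) ≤ exp (-(α * (t / (1 - t)))) := one_sub_le_exp_neg _
    _ ≤ exp (log (1 - t) * α) := by gcongr; nlinarith

lemma one_add_rpow_le_one_add_two_mul {t α s : ℝ} (ht : 0 ≤ t) (hα : 0 ≤ α)
    (hαt : α * t ≤ s) (hs : s ≤ 1 / 2) : (1 + t) ^ α ≤ 1 + 2 * s := by
  have hs0 : 0 ≤ s := (mul_nonneg hα ht).trans hαt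
  calc (1 + t) ^ α ≤ exp (α * t) := one_add_rpow_le_exp_mul ht hα
    _ ≤ exp s := exp_le_exp.mpr hαt
    _ ≤ 1 / (1 - s) := exp_bound_div_one_sub_of_interval hs0 (by linarith)
    _ ≤ 1 + 2 * s := by rw [div_le_iff₀ (by linarith)]; nlinarith

lemma rpow_mem_Icc_of_abs_sub_le {u v t α : ℝ} (hu : 0 ≤ u) (ht0 : 0 ≤ t) (ht1 : t ≤ 1)
    (hα : 0 ≤ α) (h : |v - u| ≤ t * u) :
    (1 - t) ^ α * u ^ α ≤ v ^ α ∧ v ^ α ≤ (1 + t) ^ α * u ^ α := by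
  obtain ⟨hlow, hup⟩ := abs_sub_le_iff.mp h
  have hv : 0 ≤ v := by nlinarith
  rw [← mul_rpow (by linarith) hu, ← mul_rpow (by linarith) hu]
  exact ⟨rpow_le_rpow (by nlinarith) (by linarith) hα, rpow_le_rpow hv (by linarith) hα⟩

end Real

lemma mul_div_sum_le_div_sum {ι : Type*} {X : Finset ι} {f g : ι → ℝ} {a b : ℝ} {x : ι}
    (hx : x ∈ X) (hf : ∀ y ∈ X, 0 ≤ f y) (ha : 0 ≤ a) (hb : 0 < b)
    (hlow : ∀ y ∈ X, a * f y ≤ g y) (hup : ∀ y ∈ X, g y ≤ b * f y) :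
    a / b * (f x / ∑ y ∈ X, f y) ≤ g x / ∑ y ∈ X, g y := by
  have hg : ∀ y ∈ X, 0 ≤ g y := fun y hy => (mul_nonneg ha (hf y hy)).trans (hlow y hy)
  have hF : 0 ≤ ∑ y ∈ X, f y := Finset.sum_nonneg hf
  have hG : ∑ y ∈ X, g y ≤ b * ∑ y ∈ X, f y := by
    rw [Finset.mul_sum]; exact Finset.sum_le_sum hup
  calc a / b * (f x / ∑ y ∈ X, f y) = a * f x / (b * ∑ y ∈ X, f y) := by field_simp
    _ ≤ g x / (b * ∑ y ∈ X, f y) := by gcongr; exact hlow x hx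
    _ ≤ g x / ∑ y ∈ X, g y := by
        rcases (Finset.sum_nonneg hg).eq_or_lt with hG0 | hGpos
        · simp [(Finset.sum_eq_zero_iff_of_nonneg hg).mp hG0.symm x hx]
        · exact div_le_div_of_nonneg_left (hg x hx) hGpos hG

lemma rpow_dotProduct_mulVec_bounds {d : ℕ} {M M' : Matrix (Fin d) (Fin d) ℝ} {c R α : ℝ}
    (hc : 0 < c) (hM : (M - c⁻¹ • 1).PosSemidef) (hdiff : opNorm (M - M') ≤ 1 / R)
    (hcR : c / R ≤ 1) (hα : 0 ≤ α) (y : Fin d → ℝ) :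
    (1 - c / R) ^ α * (y ⬝ᵥ M *ᵥ y) ^ α ≤ (y ⬝ᵥ M' *ᵥ y) ^ α ∧
      (y ⬝ᵥ M' *ᵥ y) ^ α ≤ (1 + c / R) ^ α * (y ⬝ᵥ M *ᵥ y) ^ α := by
  have hR : 0 ≤ 1 / R := (norm_nonneg _).trans hdiff
  exact Real.rpow_mem_Icc_of_abs_sub_le (dotProduct_mulVec_nonneg_of_posSemidef_sub hc hM y)
    (div_nonneg hc.le (one_div_nonneg.mp hR)) hcR hα (abs_dotProduct_mulVec_sub_le hc hM hdiff y)

lemma one_sub_le_one_sub_rpow_and_one_add_rpow_le {t α lam : ℝ} (hlam : lam < 1)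
    (hα : 0.69 ≤ α) (ht : 0 ≤ t) (hαt : α * t ≤ lam / 100) :
    1 - lam / 90 ≤ (1 - t) ^ α ∧ (1 + t) ^ α ≤ 1 + lam / 50 := by
  have ht1 : t ≤ 1 / 69 := by nlinarith
  constructor
  · have h : α * (t / (1 - t)) ≤ lam / 90 := by
      rw [mul_div_assoc', div_le_iff₀ (by linarith)]; nlinarith
    linarith [Real.one_sub_mul_div_le_one_sub_rpow (t := t) (by linarith) (by linarith : 0 ≤ α)]
  · linarith [Real.one_add_rpow_le_one_add_two_mul ht (by linarith) hαt (by nlinarith)]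

theorem stmt10_general {d : ℕ} (hd : 0 < d) (K : ℕ) (hK : 2 ≤ K) (α : ℝ) (hα : α = Real.log K)
    (lam : ℝ) (hlam0 : 0 < lam) (hlam1 : lam < 1)
    (R : ℝ) (hR : 100 * lam⁻¹ * d * Real.log K ≤ R)
    (M M' : Matrix (Fin d) (Fin d) ℝ)
    (hMI : (M - (d : ℝ)⁻¹ • 1).PosSemidef)
    (hdiff : opNorm (M - M') ≤ 1 / R)
    (X : Finset (Fin d → ℝ))
    (x : Fin d → ℝ) (hx : x ∈ X) :
    (1 - lam / 30) * ((x ⬝ᵥ M.mulVec x) ^ α / ∑ y ∈ X, (y ⬝ᵥ M.mulVec y) ^ α)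
      ≤ (x ⬝ᵥ M'.mulVec x) ^ α / ∑ y ∈ X, (y ⬝ᵥ M'.mulVec y) ^ α := by
  have hd' : (0 : ℝ) < d := by exact_mod_cast hd
  have hα69 : (0.69 : ℝ) ≤ α := by
    have := Real.log_le_log two_pos (show (2 : ℝ) ≤ K by exact_mod_cast hK)
    linarith [Real.log_two_gt_d9]
  have hR0 : 0 < R := lt_of_lt_of_le (by rw [← hα]; positivity) hR
  have hαt : α * (d / R) ≤ lam / 100 := by
    rw [mul_div_assoc', div_le_div_iff₀ hR0 (by norm_num)]
    calc α * d * 100 = lam * (100 * lam⁻¹ * d * Real.log K) := by field_simp; rw [hα]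
      _ ≤ lam * R := by gcongr
  have ht0 : 0 ≤ (d : ℝ) / R := by positivity
  obtain ⟨hlow, hup⟩ := one_sub_le_one_sub_rpow_and_one_add_rpow_le hlam1 hα69 ht0 hαt
  have hMy := dotProduct_mulVec_nonneg_of_posSemidef_sub hd' hMI
  have hweight (y : Fin d → ℝ) : (1 - lam / 90) * (y ⬝ᵥ M *ᵥ y) ^ α ≤ (y ⬝ᵥ M' *ᵥ y) ^ α ∧
      (y ⬝ᵥ M' *ᵥ y) ^ α ≤ (1 + lam / 50) * (y ⬝ᵥ M *ᵥ y) ^ α := by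
    obtain ⟨h1, h2⟩ := rpow_dotProduct_mulVec_bounds (α := α) hd' hMI hdiff
      (by nlinarith) (by linarith) y
    have := Real.rpow_nonneg (hMy y) α
    exact ⟨le_trans (by gcongr) h1, h2.trans (by gcongr)⟩
  calc (1 - lam / 30) * ((x ⬝ᵥ M *ᵥ x) ^ α / ∑ y ∈ X, (y ⬝ᵥ M *ᵥ y) ^ α)
      ≤ (1 - lam / 90) / (1 + lam / 50) * ((x ⬝ᵥ M *ᵥ x) ^ α / ∑ y ∈ X, (y ⬝ᵥ M *ᵥ y) ^ α) := by
        gcongr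
        · exact div_nonneg (Real.rpow_nonneg (hMy x) α)
            (Finset.sum_nonneg fun y _ => Real.rpow_nonneg (hMy y) α)
        · rw [le_div_iff₀ (by linarith)]; nlinarith
    _ ≤ (x ⬝ᵥ M' *ᵥ x) ^ α / ∑ y ∈ X, (y ⬝ᵥ M' *ᵥ y) ^ α :=
        mul_div_sum_le_div_sum hx (fun y _ => Real.rpow_nonneg (hMy y) α) (by linarith)
          (by linarith) (fun y _ => (hweight y).1) (fun y _ => (hweight y).2)

/-- Softmax probability stability: with `α = ln K`, if `M ⪰ d⁻¹ I` and `‖M - M'‖ ≤ 1/R` with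
`R ≥ 100 λ⁻¹ d ln K`, then the softmax selection probabilities under `M'` are at least
`(1 - λ/30)` times those under `M`. -/
theorem stmt10 {d : ℕ} (hd : 0 < d) (K : ℕ) (hK : 2 ≤ K) (α : ℝ) (hα : α = Real.log K)
    (lam : ℝ) (hlam0 : 0 < lam) (hlam1 : lam < 1)
    (R : ℝ) (hR : 100 * lam⁻¹ * d * Real.log K ≤ R)
    (M M' : Matrix (Fin d) (Fin d) ℝ) (hM : M.IsSymm) (hM' : M'.IsSymm)
    (hMI : (M - (d : ℝ)⁻¹ • 1).PosSemidef)
    (hdiff : opNorm (M - M') ≤ 1 / R)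
    (X : Finset (Fin d → ℝ)) (hX : ∀ y ∈ X, y ⬝ᵥ y ≤ 1)
    (x : Fin d → ℝ) (hx : x ∈ X) :
    (1 - lam / 30) * ((x ⬝ᵥ M.mulVec x) ^ α / ∑ y ∈ X, (y ⬝ᵥ M.mulVec y) ^ α)
      ≤ (x ⬝ᵥ M'.mulVec x) ^ α / ∑ y ∈ X, (y ⬝ᵥ M'.mulVec y) ^ α :=
  stmt10_general hd K hK α hα lam hlam0 hlam1 R hR M M' hMI hdiff X x hx
end

section
/- KL-divergence bound for Gaussian reward sequences in the lower-bound construction: let T ≥ 1, L ≤ (ln T)/6, M = L/4, υ = T^{−1/(2(L+1))}, and z_{j'} = υ^{−(j'+1)}/√T. For two sign sequences u, u′ ∈ {±1}^L agreeing on the first j−1 coordinates with u_j ≠ u′_j, the per-step mean reward difference in stage j′ < j is at most z_{j'}·|ψ(u) − ψ(u′)| ≤ 4 z_{j'} υʲ; consequently, the sum of KL divergences between unit-variance Gaussians over the first j−1 stages, each of length at most 2T/L, satisfies ∑_{j'=1}^{j−1} (2T/L) · 8 z_{j'}² υ^{2j} ≤ 32/L, which is at most 0.1 when L ≥ 320.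 -/
/-!
Since `L ≤ log T / 6`, the ratio `υ = T ^ (-1 / (2 (L + 1)))` is at most
`exp (-3 / 2) ≤ 1 / 2`. Two sign sequences that agree before `j` give values of `ψ` differing
by a geometric tail `2 ∑_{i ≥ j} υ ^ i ≤ 4 υ ^ j`. In the KL sum,
`z j' ^ 2 = υ ^ (-2 (j' + 1)) / T`, so the terms grow geometrically with ratio `υ ^ (-2) ≥ 2`
and their sum is at most twice the last one, which cancels against `υ ^ (2 j)`.
-/

open Finset Real

lemma rpow_neg_inv_two_mul_add_one_le_half {T L : ℝ} (hT : 1 ≤ T) (hL1 : 1 ≤ L)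
    (hL : L ≤ log T / 6) : T ^ (-(1 / (2 * (L + 1)))) ≤ 1 / 2 := by
  have hexponent : log T * -(1 / (2 * (L + 1))) ≤ -(3 / 2) := by
    have h : 3 / 2 ≤ log T / (2 * (L + 1)) := by
      rw [le_div_iff₀ (by positivity)]
      linarith
    calc log T * -(1 / (2 * (L + 1))) = -(log T / (2 * (L + 1))) := by ring
      _ ≤ -(3 / 2) := neg_le_neg h
  have hexp : exp (-(3 / 2)) ≤ 1 / 2 := by
    rw [exp_neg, inv_le_comm₀ (exp_pos _) (by norm_num)]
    linarith [add_one_le_exp (3 / 2 : ℝ)]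
  rw [rpow_def_of_pos (by linarith)]
  exact (exp_le_exp.mpr hexponent).trans hexp

lemma abs_sum_Icc_mul_pow_sub_le {x : ℝ} (hx0 : 0 ≤ x) (hx : x ≤ 1 / 2) {u u' : ℕ → ℝ}
    (hu : ∀ i, |u i| ≤ 1) (hu' : ∀ i, |u' i| ≤ 1) {j : ℕ} (hj : 1 ≤ j)
    (hagree : ∀ i < j, u i = u' i) (L : ℕ) :
    |∑ i ∈ Icc 1 L, u i * x ^ i - ∑ i ∈ Icc 1 L, u' i * x ^ i| ≤ 4 * x ^ j := by
  have htail :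
      ∑ i ∈ Icc 1 L, (u i - u' i) * x ^ i = ∑ i ∈ Icc j L, (u i - u' i) * x ^ i := by
    refine (sum_subset (Icc_subset_Icc hj le_rfl) fun i hi hij => ?_).symm
    rw [mem_Icc] at hi hij
    rw [hagree i (by omega), sub_self, zero_mul]
  have hterm : ∀ i, |(u i - u' i) * x ^ i| ≤ 2 * x ^ i := fun i => by
    rw [abs_mul, abs_of_nonneg (pow_nonneg hx0 i)]
    have : |u i - u' i| ≤ 2 := (abs_sub _ _).trans (by linarith [hu i, hu' i])
    exact mul_le_mul_of_nonneg_right this (pow_nonneg hx0 i)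
  calc |∑ i ∈ Icc 1 L, u i * x ^ i - ∑ i ∈ Icc 1 L, u' i * x ^ i|
      = |∑ i ∈ Icc j L, (u i - u' i) * x ^ i| := by
        rw [← sum_sub_distrib, ← htail]
        simp only [sub_mul]
    _ ≤ ∑ i ∈ Icc j L, 2 * x ^ i :=
        (abs_sum_le_sum_abs _ _).trans (sum_le_sum fun i _ => hterm i)
    _ = 2 * ∑ i ∈ Ico j (L + 1), x ^ i := by rw [← mul_sum, Ico_add_one_right_eq_Icc]
    _ ≤ 2 * (x ^ j / (1 - x)) := by
        gcongr
        exact geom_sum_Ico_le_of_lt_one hx0 (by linarith)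
    _ ≤ 4 * x ^ j := by
        rw [mul_div_assoc', div_le_iff₀ (by linarith)]
        nlinarith [pow_nonneg hx0 j]

lemma sum_range_pow_succ_le_two_mul_pow {q : ℝ} (hq : 2 ≤ q) (n : ℕ) :
    ∑ i ∈ range n, q ^ (i + 1) ≤ 2 * q ^ n := by
  induction n with
  | zero => simp
  | succ n ih =>
    rw [sum_range_succ, pow_succ]
    nlinarith [pow_nonneg (by linarith : (0 : ℝ) ≤ q) n]

lemma sum_Icc_kl_le {T L x : ℝ} (hT : 0 < T) (hL : 0 ≤ L) (hx0 : 0 < x) (hx : x ^ 2 ≤ 1 / 2)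
    (j : ℕ) :
    ∑ j' ∈ Icc 1 (j - 1), (2 * T / L) * (8 * ((x ^ (j' + 1))⁻¹ / √T) ^ 2 * x ^ (2 * j))
      ≤ 32 / L := by
  set q := (x ^ 2)⁻¹
  have hq : 2 ≤ q := by
    rw [le_inv_comm₀ (by norm_num) (by positivity)]
    linarith
  have hterm : ∀ j' : ℕ, (2 * T / L) * (8 * ((x ^ (j' + 1))⁻¹ / √T) ^ 2 * x ^ (2 * j))
      = 16 / L * x ^ (2 * j) * q ^ (j' + 1) := fun j' => by
    rw [div_pow, sq_sqrt hT.le, inv_pow, ← pow_mul, inv_pow, ← pow_mul, mul_comm 2 (j' + 1)]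
    field_simp
    norm_num
  have hcancel : x ^ (2 * j) * q ^ j = 1 := by
    rw [pow_mul, inv_pow, mul_inv_cancel₀ (by positivity)]
  have hsum : ∑ j' ∈ Icc 1 (j - 1), q ^ (j' + 1) ≤ 2 * q ^ j :=
    calc ∑ j' ∈ Icc 1 (j - 1), q ^ (j' + 1)
        ≤ ∑ j' ∈ range j, q ^ (j' + 1) :=
          sum_le_sum_of_subset_of_nonneg
            (fun i hi => by simp only [mem_Icc, mem_range] at hi ⊢; omega)
            fun i _ _ => by positivity
      _ ≤ 2 * q ^ j := sum_range_pow_succ_le_two_mul_pow hq j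
  calc ∑ j' ∈ Icc 1 (j - 1), (2 * T / L) * (8 * ((x ^ (j' + 1))⁻¹ / √T) ^ 2 * x ^ (2 * j))
      = 16 / L * x ^ (2 * j) * ∑ j' ∈ Icc 1 (j - 1), q ^ (j' + 1) := by
        simp only [hterm, mul_sum]
    _ ≤ 16 / L * x ^ (2 * j) * (2 * q ^ j) := by gcongr
    _ = 32 / L := by linear_combination (32 / L) * hcancel

theorem stmt19_general (T : ℝ) (hT : 1 ≤ T) (L : ℕ) (hL1 : 1 ≤ L)
    (hL : (L : ℝ) ≤ Real.log T / 6)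
    (υ : ℝ) (hυ : υ = T ^ (-(1 / (2 * ((L : ℝ) + 1)))))
    (z : ℕ → ℝ) (hz : ∀ j', z j' = (υ ^ (j' + 1))⁻¹ / Real.sqrt T)
    (u u' : ℕ → ℝ) (hu : ∀ i, u i = 1 ∨ u i = -1) (hu' : ∀ i, u' i = 1 ∨ u' i = -1)
    (j : ℕ) (hj1 : 1 ≤ j)
    (hagree : ∀ i < j, u i = u' i)
    (ψ ψ' : ℝ)
    (hψ : ψ = 1 / 2 + ∑ i ∈ Finset.Icc 1 L, u i * υ ^ i)
    (hψ' : ψ' = 1 / 2 + ∑ i ∈ Finset.Icc 1 L, u' i * υ ^ i) :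
    |ψ - ψ'| ≤ 4 * υ ^ j ∧
      (∀ j', z j' * |ψ - ψ'| ≤ 4 * z j' * υ ^ j) ∧
      (∑ j' ∈ Finset.Icc 1 (j - 1), (2 * T / (L : ℝ)) * (8 * (z j') ^ 2 * υ ^ (2 * j))
          ≤ 32 / (L : ℝ)) ∧
      ((320 : ℝ) ≤ (L : ℝ) → 32 / (L : ℝ) ≤ 0.1) := by
  have hT0 : 0 < T := by linarith
  have hυ0 : 0 < υ := hυ ▸ rpow_pos_of_pos hT0 _
  have hυhalf : υ ≤ 1 / 2 :=
    hυ ▸ rpow_neg_inv_two_mul_add_one_le_half hT (by exact_mod_cast hL1) hL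
  have habs_le_one : ∀ v : ℕ → ℝ, (∀ i, v i = 1 ∨ v i = -1) → ∀ i, |v i| ≤ 1 :=
    fun v hv i => by rcases hv i with h | h <;> simp [h]
  have hψψ' : |ψ - ψ'| ≤ 4 * υ ^ j := by
    rw [hψ, hψ', add_sub_add_left_eq_sub]
    exact abs_sum_Icc_mul_pow_sub_le hυ0.le hυhalf (habs_le_one u hu) (habs_le_one u' hu') hj1
      hagree L
  refine ⟨hψψ', fun j' => ?_, ?_, fun h320 => ?_⟩
  · have hz0 : 0 ≤ z j' := by rw [hz]; positivity
    linarith [mul_le_mul_of_nonneg_left hψψ' hz0]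
  · simp only [hz]
    exact sum_Icc_kl_le hT0 (Nat.cast_nonneg L) hυ0 (by nlinarith) j
  · rw [div_le_iff₀ (by linarith)]
    linarith

/-- KL-divergence bound for the Gaussian reward sequences in the lower-bound construction. -/
theorem stmt19 (T : ℝ) (hT : 1 ≤ T) (L : ℕ) (hL1 : 1 ≤ L)
    (hL : (L : ℝ) ≤ Real.log T / 6)
    (υ : ℝ) (hυ : υ = T ^ (-(1 / (2 * ((L : ℝ) + 1)))))
    (z : ℕ → ℝ) (hz : ∀ j', z j' = (υ ^ (j' + 1))⁻¹ / Real.sqrt T)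
    (u u' : ℕ → ℝ) (hu : ∀ i, u i = 1 ∨ u i = -1) (hu' : ∀ i, u' i = 1 ∨ u' i = -1)
    (j : ℕ) (hj1 : 1 ≤ j) (hjL : j ≤ L)
    (hagree : ∀ i < j, u i = u' i) (hdiff : u j ≠ u' j)
    (ψ ψ' : ℝ)
    (hψ : ψ = 1 / 2 + ∑ i ∈ Finset.Icc 1 L, u i * υ ^ i)
    (hψ' : ψ' = 1 / 2 + ∑ i ∈ Finset.Icc 1 L, u' i * υ ^ i) :
    |ψ - ψ'| ≤ 4 * υ ^ j ∧
      (∀ j', z j' * |ψ - ψ'| ≤ 4 * z j' * υ ^ j) ∧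
      (∑ j' ∈ Finset.Icc 1 (j - 1), (2 * T / (L : ℝ)) * (8 * (z j') ^ 2 * υ ^ (2 * j))
          ≤ 32 / (L : ℝ)) ∧
      ((320 : ℝ) ≤ (L : ℝ) → 32 / (L : ℝ) ≤ 0.1) :=
  stmt19_general T hT L hL1 hL υ hυ z hz u u' hu hu' j hj1 hagree ψ ψ' hψ hψ'
end
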